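/- arXiv:1601.06505 — 3 statements merged into one kernel-verified Lean document; each statement's English description precedes it below -/
import Mathlib

section
/- For all n ≥ 1, the number of simsun permutations π of [n+1] that start with an ascent (π(1) < π(2)) and have k interior peaks equals (1+k)·S(n,k); the number starting with a descent (π(1) > π(2)) with k interior peaks equals (n-2k)·S(n,k). -/
/-- The one-line word of a permutation, with values in `{1, …, n}`. -/
def wordOf {n : ℕ} (π : Equiv.Perm (Fin n)) : List ℕ :=
  List.ofFn fun i => (π i : ℕ) + 1

/-- A list has no double descents. -/
def NoDoubleDescents (l : List ℕ) : Prop :=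
  ∀ i : ℕ, i + 2 < l.length →
    ¬ (l.getD (i+1) 0 < l.getD i 0 ∧ l.getD (i+2) 0 < l.getD (i+1) 0)

/-- A permutation is simsun if for all `k` its subword restricted to `{1,…,k}`
has no double descents. -/
def IsSimsun {n : ℕ} (π : Equiv.Perm (Fin n)) : Prop :=
  ∀ k : ℕ, NoDoubleDescents ((wordOf π).filter (fun x => decide (x ≤ k)))

/-- Number of descents of a list. -/
def desList (l : List ℕ) : ℕ :=
  ((Finset.range l.length).filter
    (fun i => i + 1 < l.length ∧ l.getD (i+1) 0 < l.getD i 0)).card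

/-- Number of descents of a permutation. -/
def desOf {n : ℕ} (π : Equiv.Perm (Fin n)) : ℕ := desList (wordOf π)

/-- Number of interior peaks of a list. -/
def pkList (l : List ℕ) : ℕ :=
  ((Finset.range l.length).filter
    (fun i => 0 < i ∧ i + 1 < l.length ∧
      l.getD (i-1) 0 < l.getD i 0 ∧ l.getD (i+1) 0 < l.getD i 0)).card

/-- Number of interior peaks of a permutation. -/
def pkOf {n : ℕ} (π : Equiv.Perm (Fin n)) : ℕ := pkList (wordOf π)

/-- Number of simsun permutations of `[n]` with `k` descents. -/
noncomputable def Scount (n k : ℕ) : ℕ :=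
  Nat.card {π : Equiv.Perm (Fin n) // IsSimsun π ∧ desOf π = k}

/-!
Inserting the letter `n + 1` into a permutation `σ` of `[n]` at slot `p` gives a simsun
permutation iff `σ` is simsun and `p` is not a descent position of `σ`. If `σ` has `k`
descents, the admissible slots split into `k + 1` slots (at the end or right after a descent)
that keep `k` descents and `n - 2k` slots that create a new one; the child starts the same way
as `σ` except at one slot (`0` if `σ` starts with an ascent, `1` if with a descent). This gives
linear recurrences for the numbers `A(n, k)`, `B(n, k)` of simsun permutations with `k` descents
starting with an ascent, resp. a descent.

In a simsun permutation every descent not at the front is a peak, so the claim reads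
`A(n+1, k) = (1+k) S(n, k)` and `B(n+1, k+1) = (n-2k) S(n, k)`. Through the recurrences both
follow from the balance `(j+1) B(n, j+1) = (n-2j-1) A(n, j)`, which in turn is immediate from
the two formulas one level down; induction on `n` closes the circle.
-/

open Finset Equiv

def descents (l : List ℕ) : Finset ℕ :=
  {i ∈ range l.length | i + 1 < l.length ∧ l.getD (i + 1) 0 < l.getD i 0}

section Lists

variable {l : List ℕ} {i p v : ℕ}

theorem mem_descents : i ∈ descents l ↔ i + 1 < l.length ∧ l.getD (i + 1) 0 < l.getD i 0 := by
  simp only [descents, mem_filter, mem_range, and_iff_right_iff_imp]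
  omega

theorem noDoubleDescents_iff : NoDoubleDescents l ↔ ∀ i ∈ descents l, i + 1 ∉ descents l := by
  simp only [NoDoubleDescents, mem_descents, not_and]
  constructor
  · exact fun h i hi hi' => h i hi' hi.2
  · exact fun h i hi h1 => h i ⟨by omega, h1⟩ hi

theorem pkList_eq_card_erase_descents (hl : l.Nodup) (h : NoDoubleDescents l) :
    pkList l = #((descents l).erase 0) := by
  unfold pkList
  congr 1
  ext i
  simp only [mem_filter, mem_range, mem_erase, mem_descents]
  constructor
  · rintro ⟨-, hi, hlen, -, hdes⟩
    exact ⟨by omega, hlen, hdes⟩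
  · rintro ⟨hi, hlen, hdes⟩
    refine ⟨by omega, by omega, hlen, ?_, hdes⟩
    have hle := h (i - 1) (by omega)
    rw [Nat.sub_add_cancel (by omega), show i - 1 + 2 = i + 1 by omega] at hle
    have hne : l.getD (i - 1) 0 ≠ l.getD i 0 := by
      rw [List.getD_eq_getElem _ _ (by omega), List.getD_eq_getElem _ _ (by omega)]
      exact fun heq => absurd ((hl.getElem_inj_iff).1 heq) (by omega)
    omega

theorem getD_insertIdx (hp : p ≤ l.length) (j : ℕ) :
    (l.insertIdx p v).getD j 0 =
      if j < p then l.getD j 0 else if j = p then v else l.getD (j - 1) 0 := by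
  simp only [List.getD_eq_getElem?_getD, List.getElem?_insertIdx]
  split_ifs <;> simp_all

theorem mem_descents_insertIdx (hp : p ≤ l.length) (hv : ∀ x ∈ l, x < v) :
    i ∈ descents (l.insertIdx p v) ↔
      (i + 1 < p ∧ i ∈ descents l) ∨ (i = p ∧ p < l.length) ∨ (p < i ∧ i - 1 ∈ descents l) := by
  have hlt : ∀ j < l.length, l.getD j 0 < v := fun j hj => by
    rw [List.getD_eq_getElem _ _ hj]; exact hv _ (List.getElem_mem hj)
  simp only [mem_descents, List.length_insertIdx_of_le_length hp, getD_insertIdx hp]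
  rcases lt_trichotomy (i + 1) p with h | h | h
  · simp only [h, show i < p by omega, show ¬ p < i by omega, show i ≠ p by omega, if_true,
      true_and, false_and, or_false]
    omega
  · have := hlt i (by omega)
    simp only [h, show i < p by omega, show ¬ p < i by omega, show i ≠ p by omega, lt_irrefl,
      if_true, if_false, false_and, or_false, iff_false]
    omega
  · rcases (show p ≤ i by omega).eq_or_lt with h' | h'
    · subst h'
      have := hlt p
      simp only [lt_irrefl, show ¬ p + 1 < p by omega, show p + 1 ≠ p by omega, if_true,
        if_false, Nat.add_sub_cancel, true_and, false_and, or_false, false_or]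
      exact ⟨fun h => by omega, fun h => ⟨by omega, this h⟩⟩
    · simp only [show ¬ i + 1 < p by omega, show ¬ i < p by omega, show i + 1 ≠ p by omega,
        show i ≠ p by omega, h', if_false, Nat.add_sub_cancel, show i - 1 + 1 = i by omega,
        true_and, false_and, false_or]
      omega

/-- Where a descent of `l` at `i` lands in `l.insertIdx p v` for a large `v`: the one at
`p - 1` moves to `p`, since `v` now sits between its two letters. -/
def descentShift (p i : ℕ) : ℕ := if i + 1 < p then i else i + 1

theorem strictMono_descentShift (p : ℕ) : StrictMono (descentShift p) := fun i j hij => by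
  simp only [descentShift]
  split_ifs <;> omega

theorem mem_image_descentShift {D : Finset ℕ} :
    i ∈ D.image (descentShift p) ↔ (i + 1 < p ∧ i ∈ D) ∨ (p ≤ i ∧ 0 < i ∧ i - 1 ∈ D) := by
  simp only [mem_image, descentShift]
  constructor
  · rintro ⟨j, hj, rfl⟩
    split_ifs with h
    · exact Or.inl ⟨h, hj⟩
    · exact Or.inr ⟨by omega, by omega, by simpa using hj⟩
  · rintro (⟨h, hi⟩ | ⟨h, h0, hi⟩)
    · exact ⟨i, hi, if_pos h⟩
    · exact ⟨i - 1, hi, by rw [if_neg (by omega)]; omega⟩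

theorem mem_descents_insertIdx_of_ne (hp : p ≤ l.length) (hv : ∀ x ∈ l, x < v) (hi : i ≠ p) :
    i ∈ descents (l.insertIdx p v) ↔ i ∈ (descents l).image (descentShift p) := by
  rw [mem_descents_insertIdx hp hv, mem_image_descentShift]
  rcases hi.lt_or_gt with h | h
  · simp [h.ne, h.not_gt, h.not_ge]
  · simp [h, h.ne', h.le, show 0 < i by omega, show ¬ i + 1 < p by omega]

theorem card_descents_insertIdx (hp : p ≤ l.length) (hv : ∀ x ∈ l, x < v) :
    #(descents (l.insertIdx p v)) =
      #(descents l) + if p < l.length ∧ (p = 0 ∨ p - 1 ∉ descents l) then 1 else 0 := by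
  have mem_self : p ∈ descents (l.insertIdx p v) ↔ p < l.length := by
    simp [mem_descents_insertIdx hp hv]
  have self_mem_image : p ∈ (descents l).image (descentShift p) ↔ 0 < p ∧ p - 1 ∈ descents l := by
    rw [mem_image_descentShift]
    simp
  rw [← card_image_of_injective (descents l) (strictMono_descentShift p).injective]
  split_ifs with hnew
  · have hpf : p ∉ (descents l).image (descentShift p) := by
      rw [self_mem_image]
      exact fun h => hnew.2.resolve_left (by omega) h.2
    rw [← card_insert_of_notMem hpf]
    congr 1
    ext i
    rcases eq_or_ne i p with rfl | hi
    · simp [mem_self, hnew.1]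
    · rw [mem_descents_insertIdx_of_ne hp hv hi, mem_insert, or_iff_right hi]
  · rw [add_zero]
    congr 1
    ext i
    rcases eq_or_ne i p with rfl | hi
    · rw [mem_self, self_mem_image]
      constructor
      · intro h
        have := not_and.1 hnew h
        push Not at this
        exact ⟨by omega, this.2⟩
      · intro h
        have := (mem_descents.1 h.2).1
        omega
    · exact mem_descents_insertIdx_of_ne hp hv hi

theorem noDoubleDescents_insertIdx_iff (hp : p ≤ l.length) (hv : ∀ x ∈ l, x < v)
    (hl : NoDoubleDescents l) :
    NoDoubleDescents (l.insertIdx p v) ↔ p ∉ descents l := by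
  rw [noDoubleDescents_iff] at hl ⊢
  simp only [mem_descents_insertIdx hp hv]
  constructor
  · intro h hpD
    have := (mem_descents.1 hpD).1
    exact h p (Or.inr (Or.inl ⟨rfl, by omega⟩)) (Or.inr (Or.inr ⟨by omega, by simpa using hpD⟩))
  · rintro hpD i (⟨h1, h2⟩ | ⟨h1, h2⟩ | ⟨h1, h2⟩) (⟨g1, g2⟩ | ⟨g1, g2⟩ | ⟨g1, g2⟩) <;>
      (try simp only [Nat.add_sub_cancel] at g2)
    all_goals first | omega | skip
    · exact hl i h2 g2
    · exact hpD (h1 ▸ g2)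
    · exact hl (i - 1) h2 (by rwa [Nat.sub_add_cancel (by omega)])

theorem filter_insertIdx_of_lt {k : ℕ} (hk : k < v) (l : List ℕ) (p : ℕ) :
    (l.insertIdx p v).filter (fun x => decide (x ≤ k)) = l.filter (fun x => decide (x ≤ k)) := by
  induction l generalizing p with
  | nil => cases p <;> simp [hk]
  | cons a l ih => cases p <;> simp_all [List.filter_cons]

end Lists

section Perm

variable {n : ℕ}

theorem desOf_eq_card_descents (σ : Perm (Fin n)) : desOf σ = #(descents (wordOf σ)) := rfl

theorem length_wordOf (σ : Perm (Fin n)) : (wordOf σ).length = n := List.length_ofFn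

theorem lt_of_mem_wordOf {σ : Perm (Fin n)} {x : ℕ} (hx : x ∈ wordOf σ) : x < n + 1 := by
  obtain ⟨i, rfl⟩ := List.mem_ofFn.1 hx
  simp

theorem nodup_wordOf (σ : Perm (Fin n)) : (wordOf σ).Nodup :=
  List.nodup_ofFn.2 fun i j h => σ.injective (Fin.ext (by simpa using h))

theorem add_one_lt_of_mem_descents_wordOf {σ : Perm (Fin n)} {i : ℕ}
    (hi : i ∈ descents (wordOf σ)) : i + 1 < n := by
  simpa [length_wordOf] using (mem_descents.1 hi).1

theorem filter_wordOf_of_le {σ : Perm (Fin n)} {k : ℕ} (hk : n ≤ k) :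
    (wordOf σ).filter (fun x => decide (x ≤ k)) = wordOf σ :=
  List.filter_eq_self.2 fun x hx => by have := lt_of_mem_wordOf hx; simp; omega

theorem IsSimsun.noDoubleDescents {σ : Perm (Fin n)} (h : IsSimsun σ) :
    NoDoubleDescents (wordOf σ) := by
  simpa only [filter_wordOf_of_le le_rfl] using h n

/-- The permutation whose word is that of `σ` with the letter `n + 1` inserted at position `p`
(see `wordOf_insertMax`). -/
def insertMax (p : Fin (n + 1)) (σ : Perm (Fin n)) : Perm (Fin (n + 1)) :=
  (finSuccEquiv' p).trans (σ.optionCongr.trans (finSuccEquiv' (Fin.last n)).symm)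

theorem insertMax_apply_self (p : Fin (n + 1)) (σ : Perm (Fin n)) :
    insertMax p σ p = Fin.last n := by
  simp [insertMax, finSuccEquiv'_at, finSuccEquiv'_symm_none]

theorem insertMax_apply_succAbove (p : Fin (n + 1)) (σ : Perm (Fin n)) (i : Fin n) :
    insertMax p σ (p.succAbove i) = (σ i).castSucc := by
  simp only [insertMax, Equiv.trans_apply, finSuccEquiv'_succAbove, Equiv.optionCongr_apply,
    Option.map_some]
  exact finSuccEquiv'_symm_some_below (Fin.castSucc_lt_last _)

theorem insertMax_bijective :
    Function.Bijective fun x : Fin (n + 1) × Perm (Fin n) => insertMax x.1 x.2 := by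
  have hinj : Function.Injective fun x : Fin (n + 1) × Perm (Fin n) => insertMax x.1 x.2 := by
    rintro ⟨p, σ⟩ ⟨q, τ⟩ h
    simp only at h
    obtain rfl : p = q := (insertMax q τ).injective <| by
      rw [insertMax_apply_self, ← h, insertMax_apply_self]
    obtain rfl : σ = τ := Equiv.ext fun i => Fin.castSucc_injective _ <| by
      rw [← insertMax_apply_succAbove, ← insertMax_apply_succAbove, h]
    rfl
  refine (Fintype.bijective_iff_injective_and_card _).2 ⟨hinj, ?_⟩
  simp [Fintype.card_perm, Nat.factorial_succ]

theorem wordOf_insertMax (p : Fin (n + 1)) (σ : Perm (Fin n)) :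
    wordOf (insertMax p σ) = (wordOf σ).insertIdx p (n + 1) := by
  have hp : (p : ℕ) ≤ (wordOf σ).length := by rw [length_wordOf]; omega
  refine List.ext_getElem (by simp [length_wordOf, List.length_insertIdx_of_le_length hp])
    fun j h₁ h₂ => ?_
  have hjn : j < n + 1 := by simpa [length_wordOf] using h₁
  rcases lt_trichotomy j p with h | rfl | h
  · have hj : (⟨j, hjn⟩ : Fin (n + 1)) = p.succAbove ⟨j, by omega⟩ :=
      (Fin.succAbove_of_castSucc_lt p ⟨j, by omega⟩ (by rw [Fin.lt_def]; exact h)).symm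
    simp only [List.getElem_insertIdx_of_lt h, wordOf, List.getElem_ofFn, hj,
      insertMax_apply_succAbove, Fin.val_castSucc]
  · have hj : (⟨p, hjn⟩ : Fin (n + 1)) = p := rfl
    simp only [List.getElem_insertIdx_self, wordOf, List.getElem_ofFn, hj, insertMax_apply_self,
      Fin.val_last]
  · have hj : (⟨j, hjn⟩ : Fin (n + 1)) = p.succAbove ⟨j - 1, by omega⟩ := by
      rw [Fin.succAbove_of_le_castSucc _ _ (by simp [Fin.le_def]; omega)]
      ext; simp; omega
    simp only [List.getElem_insertIdx_of_gt h, wordOf, List.getElem_ofFn, hj,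
      insertMax_apply_succAbove, Fin.val_castSucc]

end Perm

section Slots

variable {n : ℕ} {D : Finset ℕ}

/-! Insertion slots `q ∈ [0, n]` for a new maximum in a word of length `n` with descent set `D`:
at a slot of `keepSlots` (the end, or right after a descent) the number of descents stays the
same, at a slot of `addSlots` it grows by one. -/

def keepSlots (n : ℕ) (D : Finset ℕ) : Finset ℕ := insert n (D.image (· + 1))

def addSlots (n : ℕ) (D : Finset ℕ) : Finset ℕ := range n \ (D ∪ D.image (· + 1))

theorem mem_addSlots_iff {q : ℕ} :
    q ∈ addSlots n D ↔ q < n + 1 ∧ q ∉ D ∧ (q < n ∧ (q = 0 ∨ q - 1 ∉ D)) := by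
  simp only [addSlots, mem_sdiff, mem_range, mem_union, mem_image, not_or, not_exists, not_and]
  constructor
  · rintro ⟨hq, hqD, hsucc⟩
    refine ⟨by omega, hqD, hq, ?_⟩
    rcases Nat.eq_zero_or_pos q with h | h
    · exact Or.inl h
    · exact Or.inr fun h' => hsucc _ h' (by omega)
  · rintro ⟨-, hqD, hq, hnew⟩
    refine ⟨hq, hqD, fun i hi hiq => ?_⟩
    rcases hnew with h | h
    · omega
    · exact h (by rwa [← hiq, Nat.add_sub_cancel])

theorem zero_notMem_keepSlots (hn : 0 < n) : 0 ∉ keepSlots n D := by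
  simp only [keepSlots, mem_insert, mem_image, not_or, not_exists, not_and]
  exact ⟨by omega, fun _ _ => by omega⟩

theorem zero_mem_addSlots (hn : 0 < n) (h0 : 0 ∉ D) : 0 ∈ addSlots n D :=
  mem_addSlots_iff.2 ⟨by omega, h0, hn, Or.inl rfl⟩

theorem one_mem_keepSlots (h0 : 0 ∈ D) : 1 ∈ keepSlots n D :=
  mem_insert_of_mem (mem_image_of_mem _ h0)

theorem one_notMem_addSlots (h0 : 0 ∈ D) : 1 ∉ addSlots n D := by
  simp [mem_addSlots_iff, h0]

variable (hD : ∀ i ∈ D, i + 1 < n) (hadj : ∀ i ∈ D, i + 1 ∉ D)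
include hD

theorem card_keepSlots : #(keepSlots n D) = #D + 1 := by
  rw [keepSlots, card_insert_of_notMem, card_image_of_injective _ (add_left_injective 1)]
  simp only [mem_image, not_exists, not_and]
  exact fun i hi h => by have := hD i hi; omega

include hadj

theorem card_addSlots : #(addSlots n D) = n - 2 * #D := by
  have hsub : D ∪ D.image (· + 1) ⊆ range n := by
    intro i hi
    simp only [mem_union, mem_image] at hi
    rcases hi with hi | ⟨j, hj, rfl⟩ <;> simp only [mem_range]
    · have := hD i hi; omega
    · exact hD j hj
  have hdisj : Disjoint D (D.image (· + 1)) := by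
    simp only [disjoint_left, mem_image, not_exists, not_and]
    exact fun i hi j hj hji => hadj j hj (hji ▸ hi)
  rw [addSlots, card_sdiff_of_subset hsub, card_range, card_union_of_disjoint hdisj,
    card_image_of_injective _ (add_left_injective 1), two_mul]

theorem mem_keepSlots_iff {q : ℕ} :
    q ∈ keepSlots n D ↔ q < n + 1 ∧ q ∉ D ∧ ¬ (q < n ∧ (q = 0 ∨ q - 1 ∉ D)) := by
  simp only [keepSlots, mem_insert, mem_image]
  constructor
  · rintro (rfl | ⟨i, hi, rfl⟩)
    · exact ⟨by omega, fun h => by have := hD q h; omega, by omega⟩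
    · have := hD i hi
      exact ⟨by omega, hadj i hi, by simp [hi]⟩
  · rintro ⟨hq, -, hnew⟩
    rcases (Nat.lt_succ_iff.1 hq).lt_or_eq with h | h
    · push Not at hnew
      exact Or.inr ⟨q - 1, (hnew h).2, by have := (hnew h).1; omega⟩
    · exact Or.inl h

theorem card_filter_slots (T : ℕ → Prop) [DecidablePred T] (d : ℕ) :
    #{q ∈ range (n + 1) | q ∉ D ∧ T q ∧
        #D + (if q < n ∧ (q = 0 ∨ q - 1 ∉ D) then 1 else 0) = d} =
      (if d = #D then #{q ∈ keepSlots n D | T q} else 0) +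
        (if d = #D + 1 then #{q ∈ addSlots n D | T q} else 0) := by
  split_ifs with h₁ h₂ h₂
  · omega
  · subst h₁
    rw [add_zero]
    congr 1
    ext q
    simp only [mem_filter, mem_range, mem_keepSlots_iff hD hadj]
    split_ifs <;> simp_all [and_assoc]
  · subst h₂
    rw [zero_add]
    congr 1
    ext q
    simp only [mem_filter, mem_range, mem_addSlots_iff]
    split_ifs <;> simp_all [and_assoc]
  · simp only [add_zero, card_eq_zero, filter_eq_empty_iff]
    intro q _
    split_ifs <;> omega

end Slots

section Children

variable {n : ℕ}

theorem isSimsun_insertMax_iff (p : Fin (n + 1)) (σ : Perm (Fin n)) :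
    IsSimsun (insertMax p σ) ↔ IsSimsun σ ∧ (p : ℕ) ∉ descents (wordOf σ) := by
  have hp : (p : ℕ) ≤ (wordOf σ).length := by rw [length_wordOf]; omega
  have hv : ∀ x ∈ wordOf σ, x < n + 1 := fun x => lt_of_mem_wordOf
  have hres : ∀ k ≤ n, (wordOf (insertMax p σ)).filter (fun x => decide (x ≤ k)) =
      (wordOf σ).filter (fun x => decide (x ≤ k)) := fun k hk => by
    rw [wordOf_insertMax, filter_insertIdx_of_lt (by omega)]
  have hσ_iff :
      IsSimsun σ ↔ ∀ k ≤ n, NoDoubleDescents ((wordOf σ).filter fun x => decide (x ≤ k)) :=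
    ⟨fun h k _ => h k, fun h k => (le_total k n).elim (h k) fun hk => by
      simpa only [filter_wordOf_of_le hk, filter_wordOf_of_le le_rfl] using h n le_rfl⟩
  constructor
  · intro h
    have hσ : IsSimsun σ := hσ_iff.2 fun k hk => hres k hk ▸ h k
    refine ⟨hσ, (noDoubleDescents_insertIdx_iff hp hv hσ.noDoubleDescents).1 ?_⟩
    rw [← wordOf_insertMax]
    exact h.noDoubleDescents
  · rintro ⟨hσ, hpD⟩ k
    rcases le_or_gt k n with hk | hk
    · rw [hres k hk]
      exact hσ k
    · rw [filter_wordOf_of_le hk, wordOf_insertMax]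
      exact (noDoubleDescents_insertIdx_iff hp hv hσ.noDoubleDescents).2 hpD

theorem card_descents_wordOf_insertMax (p : Fin (n + 1)) (σ : Perm (Fin n)) :
    #(descents (wordOf (insertMax p σ))) = #(descents (wordOf σ)) +
      if (p : ℕ) < n ∧ ((p : ℕ) = 0 ∨ (p : ℕ) - 1 ∉ descents (wordOf σ)) then 1 else 0 := by
  rw [wordOf_insertMax,
    card_descents_insertIdx (by rw [length_wordOf]; omega) fun x => lt_of_mem_wordOf,
    length_wordOf]

theorem zero_mem_descents_insertMax (hn : 0 < n) (p : Fin (n + 1)) (σ : Perm (Fin n)) :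
    0 ∈ descents (wordOf (insertMax p σ)) ↔
      (p : ℕ) = 0 ∨ (1 < (p : ℕ) ∧ 0 ∈ descents (wordOf σ)) := by
  rw [wordOf_insertMax, mem_descents_insertIdx (by rw [length_wordOf]; omega)
    fun x => lt_of_mem_wordOf, length_wordOf]
  constructor
  · rintro (⟨h, h'⟩ | ⟨h, -⟩ | ⟨h, -⟩)
    · exact Or.inr ⟨h, h'⟩
    · exact Or.inl h.symm
    · omega
  · rintro (h | ⟨h, h'⟩)
    · exact Or.inr (Or.inl ⟨h.symm, by omega⟩)
    · exact Or.inl ⟨h, h'⟩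

end Children

section Counting

open scoped Classical in
noncomputable def simsunAsc (n k : ℕ) : Finset (Perm (Fin n)) :=
  {σ | IsSimsun σ ∧ 0 ∉ descents (wordOf σ) ∧ desOf σ = k}

open scoped Classical in
noncomputable def simsunDesc (n k : ℕ) : Finset (Perm (Fin n)) :=
  {σ | IsSimsun σ ∧ 0 ∈ descents (wordOf σ) ∧ desOf σ = k}

variable {n : ℕ}

theorem mem_simsunAsc {σ : Perm (Fin n)} {k : ℕ} :
    σ ∈ simsunAsc n k ↔ IsSimsun σ ∧ 0 ∉ descents (wordOf σ) ∧ desOf σ = k := by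
  simp [simsunAsc]

theorem mem_simsunDesc {σ : Perm (Fin n)} {k : ℕ} :
    σ ∈ simsunDesc n k ↔ IsSimsun σ ∧ 0 ∈ descents (wordOf σ) ∧ desOf σ = k := by
  simp [simsunDesc]

theorem card_filter_fin_eq_card_filter_range (R : ℕ → Prop) [DecidablePred R] :
    #{p : Fin (n + 1) | R p} = #{q ∈ range (n + 1) | R q} := by
  simp only [card_filter]
  exact Fin.sum_univ_eq_sum_range (fun q => if R q then 1 else 0) (n + 1)

variable (hn : 0 < n) {σ : Perm (Fin n)} (hσ : IsSimsun σ)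
include hn hσ

theorem card_insertMax_mem_simsunAsc (d : ℕ) :
    #{p | insertMax p σ ∈ simsunAsc (n + 1) d} =
      if 0 ∈ descents (wordOf σ) then (if d = desOf σ then 1 else 0)
      else (if d = desOf σ then desOf σ + 1 else 0) +
        (if d = desOf σ + 1 then n - 2 * desOf σ - 1 else 0) := by
  rw [desOf_eq_card_descents]
  set D := descents (wordOf σ)
  have hD : ∀ i ∈ D, i + 1 < n := fun i => add_one_lt_of_mem_descents_wordOf
  have hadj := noDoubleDescents_iff.1 hσ.noDoubleDescents
  have hcard : #{p | insertMax p σ ∈ simsunAsc (n + 1) d} =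
      #{q ∈ range (n + 1) | q ∉ D ∧ ¬ (q = 0 ∨ 1 < q ∧ 0 ∈ D) ∧
        #D + (if q < n ∧ (q = 0 ∨ q - 1 ∉ D) then 1 else 0) = d} := by
    rw [← card_filter_fin_eq_card_filter_range]
    congr 1
    ext p
    simp [mem_simsunAsc, isSimsun_insertMax_iff, zero_mem_descents_insertMax hn,
      desOf_eq_card_descents, card_descents_wordOf_insertMax, hσ, D]
  rw [hcard, card_filter_slots hD hadj]
  by_cases h0 : 0 ∈ D
  · have hT : ∀ q, ¬ (q = 0 ∨ 1 < q ∧ 0 ∈ D) ↔ q = 1 := fun q => by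
      simp only [h0, and_true]; omega
    simp only [hT, filter_eq', if_pos (one_mem_keepSlots h0), if_neg (one_notMem_addSlots h0),
      card_singleton, card_empty, if_pos h0]
    split_ifs <;> omega
  · have hT : ∀ q, ¬ (q = 0 ∨ 1 < q ∧ 0 ∈ D) ↔ q ≠ 0 := fun q => by
      simp only [h0, and_false, or_false]
    simp only [hT, filter_ne', erase_eq_of_notMem (zero_notMem_keepSlots hn),
      card_erase_of_mem (zero_mem_addSlots hn h0), card_keepSlots hD, card_addSlots hD hadj,
      if_neg h0]

theorem card_insertMax_mem_simsunDesc (d : ℕ) :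
    #{p | insertMax p σ ∈ simsunDesc (n + 1) d} =
      if 0 ∈ descents (wordOf σ) then
        (if d = desOf σ then desOf σ else 0) + (if d = desOf σ + 1 then n - 2 * desOf σ else 0)
      else (if d = desOf σ + 1 then 1 else 0) := by
  rw [desOf_eq_card_descents]
  set D := descents (wordOf σ)
  have hD : ∀ i ∈ D, i + 1 < n := fun i => add_one_lt_of_mem_descents_wordOf
  have hadj := noDoubleDescents_iff.1 hσ.noDoubleDescents
  have hcard : #{p | insertMax p σ ∈ simsunDesc (n + 1) d} =
      #{q ∈ range (n + 1) | q ∉ D ∧ (q = 0 ∨ 1 < q ∧ 0 ∈ D) ∧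
        #D + (if q < n ∧ (q = 0 ∨ q - 1 ∉ D) then 1 else 0) = d} := by
    rw [← card_filter_fin_eq_card_filter_range]
    congr 1
    ext p
    simp [mem_simsunDesc, isSimsun_insertMax_iff, zero_mem_descents_insertMax hn,
      desOf_eq_card_descents, card_descents_wordOf_insertMax, hσ, D]
  rw [hcard, card_filter_slots hD hadj]
  by_cases h0 : 0 ∈ D
  · have hT : ∀ q, (q = 0 ∨ 1 < q ∧ 0 ∈ D) ↔ q ≠ 1 := fun q => by
      simp only [h0, and_true]; omega
    simp only [hT, filter_ne', card_erase_of_mem (one_mem_keepSlots h0),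
      erase_eq_of_notMem (one_notMem_addSlots h0), card_keepSlots hD, card_addSlots hD hadj,
      if_pos h0]
    split_ifs <;> omega
  · have hT : ∀ q, (q = 0 ∨ 1 < q ∧ 0 ∈ D) ↔ q = 0 := fun q => by
      simp only [h0, and_false, or_false]
    simp only [hT, filter_eq', if_neg (zero_notMem_keepSlots hn), if_pos (zero_mem_addSlots hn h0),
      card_singleton, card_empty, if_neg h0]
    split_ifs <;> omega

end Counting

section Recurrences

variable {n : ℕ}

theorem card_eq_sum_card_insertMax (s : Finset (Perm (Fin (n + 1)))) :
    #s = ∑ σ : Perm (Fin n), #{p | insertMax p σ ∈ s} := by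
  calc #s = ∑ π, if π ∈ s then 1 else 0 := by simp
    _ = ∑ x : Fin (n + 1) × Perm (Fin n), if insertMax x.1 x.2 ∈ s then 1 else 0 :=
      ((Equiv.ofBijective _ insertMax_bijective).sum_comp fun π => if π ∈ s then 1 else 0).symm
    _ = ∑ σ : Perm (Fin n), #{p | insertMax p σ ∈ s} := by
      simp only [Fintype.sum_prod_type_right, card_filter]

theorem sum_ite_mem_univ {α : Type*} [Fintype α] [DecidableEq α] (t : Finset α) (c : ℕ) :
    ∑ x, (if x ∈ t then c else 0) = #t * c := by
  simp [sum_ite_mem]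

variable (hn : 0 < n)
include hn

theorem card_simsunAsc_succ_zero :
    #(simsunAsc (n + 1) 0) = #(simsunAsc n 0) + #(simsunDesc n 0) := by
  have h : ∀ σ : Perm (Fin n), #{p | insertMax p σ ∈ simsunAsc (n + 1) 0} =
      (if σ ∈ simsunAsc n 0 then 1 else 0) + (if σ ∈ simsunDesc n 0 then 1 else 0) := by
    intro σ
    by_cases hσ : IsSimsun σ
    · rw [card_insertMax_mem_simsunAsc hn hσ]
      by_cases h0 : 0 ∈ descents (wordOf σ) <;>
        simp only [mem_simsunAsc, mem_simsunDesc, hσ, h0, true_and, not_true, not_false_eq_true,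
          false_and, Nat.zero_ne_add_one, ↓reduceIte] <;> split_ifs <;> omega
    · simp [mem_simsunAsc, mem_simsunDesc, isSimsun_insertMax_iff, hσ]
  simp only [card_eq_sum_card_insertMax (simsunAsc (n + 1) 0), h, sum_add_distrib,
    sum_ite_mem_univ, mul_one]

theorem card_simsunAsc_succ_succ (j : ℕ) :
    #(simsunAsc (n + 1) (j + 1)) = (j + 2) * #(simsunAsc n (j + 1)) + #(simsunDesc n (j + 1)) +
      (n - 2 * j - 1) * #(simsunAsc n j) := by
  have h : ∀ σ : Perm (Fin n), #{p | insertMax p σ ∈ simsunAsc (n + 1) (j + 1)} =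
      (if σ ∈ simsunAsc n (j + 1) then j + 2 else 0) + (if σ ∈ simsunDesc n (j + 1) then 1 else 0) +
        (if σ ∈ simsunAsc n j then n - 2 * j - 1 else 0) := by
    intro σ
    by_cases hσ : IsSimsun σ
    · rw [card_insertMax_mem_simsunAsc hn hσ]
      by_cases h0 : 0 ∈ descents (wordOf σ) <;>
        simp only [mem_simsunAsc, mem_simsunDesc, hσ, h0, true_and, not_true, not_false_eq_true,
          false_and, ↓reduceIte] <;> split_ifs <;> omega
    · simp [mem_simsunAsc, mem_simsunDesc, isSimsun_insertMax_iff, hσ]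
  simp only [card_eq_sum_card_insertMax (simsunAsc (n + 1) (j + 1)), h, sum_add_distrib,
    sum_ite_mem_univ]
  ring

theorem card_simsunDesc_succ_succ (j : ℕ) :
    #(simsunDesc (n + 1) (j + 1)) = #(simsunAsc n j) + (j + 1) * #(simsunDesc n (j + 1)) +
      (n - 2 * j) * #(simsunDesc n j) := by
  have h : ∀ σ : Perm (Fin n), #{p | insertMax p σ ∈ simsunDesc (n + 1) (j + 1)} =
      (if σ ∈ simsunAsc n j then 1 else 0) + (if σ ∈ simsunDesc n (j + 1) then j + 1 else 0) +
        (if σ ∈ simsunDesc n j then n - 2 * j else 0) := by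
    intro σ
    by_cases hσ : IsSimsun σ
    · rw [card_insertMax_mem_simsunDesc hn hσ]
      by_cases h0 : 0 ∈ descents (wordOf σ) <;>
        simp only [mem_simsunAsc, mem_simsunDesc, hσ, h0, true_and, not_true, not_false_eq_true,
          false_and, ↓reduceIte] <;> split_ifs <;> omega
    · simp [mem_simsunAsc, mem_simsunDesc, isSimsun_insertMax_iff, hσ]
  simp only [card_eq_sum_card_insertMax (simsunDesc (n + 1) (j + 1)), h, sum_add_distrib,
    sum_ite_mem_univ]
  ring

end Recurrences

section Main

variable {n : ℕ}

theorem card_simsunAsc_add_card_simsunDesc (k : ℕ) :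
    #(simsunAsc n k) + #(simsunDesc n k) = Scount n k := by
  classical
  have hdisj : Disjoint (simsunAsc n k) (simsunDesc n k) := disjoint_left.2 fun σ h₁ h₂ =>
    (mem_simsunAsc.1 h₁).2.1 (mem_simsunDesc.1 h₂).2.1
  rw [← card_union_of_disjoint hdisj, Scount, Nat.card_eq_fintype_card, Fintype.card_subtype]
  congr 1
  ext σ
  simp only [mem_union, mem_simsunAsc, mem_simsunDesc, mem_filter, mem_univ, true_and]
  tauto

theorem card_simsunAsc_eq_zero (hn : 0 < n) {k : ℕ} (hk : n < 2 * k + 1) :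
    #(simsunAsc n k) = 0 := by
  refine card_eq_zero.2 (eq_empty_iff_forall_notMem.2 fun σ hσ => ?_)
  obtain ⟨hs, h0, rfl⟩ := mem_simsunAsc.1 hσ
  have hslot := card_pos.2 ⟨0, zero_mem_addSlots hn h0⟩
  rw [card_addSlots (fun i => add_one_lt_of_mem_descents_wordOf)
    (noDoubleDescents_iff.1 hs.noDoubleDescents), ← desOf_eq_card_descents] at hslot
  omega

theorem simsunDesc_one (k : ℕ) : simsunDesc 1 k = ∅ :=
  eq_empty_iff_forall_notMem.2 fun σ hσ =>
    absurd (add_one_lt_of_mem_descents_wordOf (mem_simsunDesc.1 hσ).2.1) (by omega)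

theorem card_simsun_succ_of_balance (hn : 0 < n)
    (hbal : ∀ j, (j + 1) * #(simsunDesc n (j + 1)) = (n - 2 * j - 1) * #(simsunAsc n j)) (k : ℕ) :
    #(simsunAsc (n + 1) k) = (1 + k) * Scount n k ∧
      #(simsunDesc (n + 1) (k + 1)) = (n - 2 * k) * Scount n k := by
  rw [← card_simsunAsc_add_card_simsunDesc]
  constructor
  · cases k with
    | zero => rw [card_simsunAsc_succ_zero hn]; ring
    | succ j => rw [card_simsunAsc_succ_succ hn, ← hbal]; ring
  · rw [card_simsunDesc_succ_succ hn, hbal]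
    rcases le_or_gt (2 * k + 1) n with hk | hk
    · obtain ⟨t, ht⟩ : ∃ t, n - 2 * k = t + 1 := ⟨n - 2 * k - 1, by omega⟩
      rw [ht, Nat.add_sub_cancel]
      ring
    · rw [card_simsunAsc_eq_zero hn hk, show n - 2 * k = 0 by omega]
      ring

theorem balance_one (j : ℕ) :
    (j + 1) * #(simsunDesc 1 (j + 1)) = (1 - 2 * j - 1) * #(simsunAsc 1 j) := by
  simp [simsunDesc_one]

theorem balance_succ
    (h : ∀ k, #(simsunAsc (n + 1) k) = (1 + k) * Scount n k ∧
      #(simsunDesc (n + 1) (k + 1)) = (n - 2 * k) * Scount n k) (j : ℕ) :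
    (j + 1) * #(simsunDesc (n + 1) (j + 1)) = (n + 1 - 2 * j - 1) * #(simsunAsc (n + 1) j) := by
  rw [(h j).1, (h j).2, show n + 1 - 2 * j - 1 = n - 2 * j by omega]
  ring

theorem card_simsun_succ (hn : 0 < n) (k : ℕ) :
    #(simsunAsc (n + 1) k) = (1 + k) * Scount n k ∧
      #(simsunDesc (n + 1) (k + 1)) = (n - 2 * k) * Scount n k := by
  induction n, hn using Nat.le_induction generalizing k with
  | base => exact card_simsun_succ_of_balance one_pos balance_one k
  | succ n hn ih => exact card_simsun_succ_of_balance (by omega) (balance_succ ih) k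

end Main

section Peaks

variable {n : ℕ}

theorem pkOf_add_ite_eq_desOf {π : Perm (Fin n)} (hπ : IsSimsun π) :
    pkOf π + (if 0 ∈ descents (wordOf π) then 1 else 0) = desOf π := by
  rw [pkOf, pkList_eq_card_erase_descents (nodup_wordOf π) hπ.noDoubleDescents,
    desOf_eq_card_descents]
  split_ifs with h0
  · exact card_erase_add_one h0
  · rw [erase_eq_of_notMem h0, add_zero]

theorem getD_one_lt_getD_zero_iff (hn : 2 ≤ n) (π : Perm (Fin n)) :
    (wordOf π).getD 1 0 < (wordOf π).getD 0 0 ↔ 0 ∈ descents (wordOf π) := by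
  rw [mem_descents, length_wordOf]
  exact (and_iff_right hn).symm

theorem getD_zero_lt_getD_one_iff (hn : 2 ≤ n) (π : Perm (Fin n)) :
    (wordOf π).getD 0 0 < (wordOf π).getD 1 0 ↔ 0 ∉ descents (wordOf π) := by
  have hne : (wordOf π).getD 0 0 ≠ (wordOf π).getD 1 0 := by
    rw [List.getD_eq_getElem _ _ (by rw [length_wordOf]; omega),
      List.getD_eq_getElem _ _ (by rw [length_wordOf]; omega)]
    exact fun h => absurd ((nodup_wordOf π).getElem_inj_iff.1 h) (by omega)
  rw [← getD_one_lt_getD_zero_iff hn]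
  omega

theorem natCard_ascentStart_pkOf (hn : 0 < n) (k : ℕ) :
    Nat.card {π : Perm (Fin (n + 1)) // IsSimsun π ∧
        (wordOf π).getD 0 0 < (wordOf π).getD 1 0 ∧ pkOf π = k} = #(simsunAsc (n + 1) k) := by
  classical
  rw [Nat.card_eq_fintype_card, Fintype.card_subtype]
  congr 1
  ext π
  simp only [mem_filter, mem_univ, true_and, mem_simsunAsc,
    getD_zero_lt_getD_one_iff (show 2 ≤ n + 1 by omega)]
  constructor <;> rintro ⟨hπ, h0, hk⟩ <;> have := pkOf_add_ite_eq_desOf hπ <;>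
    simp only [h0, if_false, add_zero] at this <;> exact ⟨hπ, h0, by omega⟩

theorem natCard_descentStart_pkOf (hn : 0 < n) (k : ℕ) :
    Nat.card {π : Perm (Fin (n + 1)) // IsSimsun π ∧
        (wordOf π).getD 1 0 < (wordOf π).getD 0 0 ∧ pkOf π = k} =
      #(simsunDesc (n + 1) (k + 1)) := by
  classical
  rw [Nat.card_eq_fintype_card, Fintype.card_subtype]
  congr 1
  ext π
  simp only [mem_filter, mem_univ, true_and, mem_simsunDesc,
    getD_one_lt_getD_zero_iff (show 2 ≤ n + 1 by omega)]
  constructor <;> rintro ⟨hπ, h0, hk⟩ <;> have := pkOf_add_ite_eq_desOf hπ <;>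
    simp only [h0, if_true] at this <;> exact ⟨hπ, h0, by omega⟩

end Peaks

/-- For `n ≥ 1`: the number of simsun permutations of `[n+1]` starting with an ascent
(`π(1) < π(2)`) having `k` interior peaks is `(1+k)·S(n,k)`, and the number starting
with a descent (`π(1) > π(2)`) having `k` interior peaks is `(n-2k)·S(n,k)`. -/
theorem stmt4 (n k : ℕ) (hn : 1 ≤ n) :
    Nat.card {π : Equiv.Perm (Fin (n + 1)) // IsSimsun π ∧
        (wordOf π).getD 0 0 < (wordOf π).getD 1 0 ∧ pkOf π = k} =
      (1 + k) * Scount n k ∧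
    Nat.card {π : Equiv.Perm (Fin (n + 1)) // IsSimsun π ∧
        (wordOf π).getD 1 0 < (wordOf π).getD 0 0 ∧ pkOf π = k} =
      (n - 2 * k) * Scount n k := by
  rw [natCard_ascentStart_pkOf hn, natCard_descentStart_pkOf hn]
  exact card_simsun_succ hn k
end

section
/- For every n ≥ 2, the polynomial S_n(x) has only real zeros, all lying in (-∞, 0), and they are simple. -/
/-!
Write `S_n = c ∏_{i<d} (X - r_i)` with `c > 0` and `r_0 < ⋯ < r_{d-1} < 0`, and induct on `n`
(the case `S_0 = 1` is `d = 0`). At a root, `S_{n+1}(r_i) = r_i (1 - 2 r_i) S_n'(r_i)`; the factor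
`r_i (1 - 2 r_i)` is negative and `S_n'` alternates in sign along simple roots, so `S_{n+1}`
alternates in sign along `r_0, …, r_{d-1}, 0` (note `S_{n+1}(0) = S_n(0) > 0`) and has a root in
each of the `d` gaps. Since `deg S_{n+1} ≤ d + 1`, the remaining factor is constant or linear with
leading coefficient `(n - 2d) c ≥ 0` (as `2 deg S_n ≤ n`); in the linear case the sign of
`S_{n+1}` at `r_0` puts its root to the left of `r_0`.
-/

open Polynomial in
/-- The descent polynomials `S_n(x)` of simsun permutations, defined by `S_0(x) = 1` and
`S_{n+1}(x) = (1 + n x)·S_n(x) + x(1 - 2x)·S_n'(x)`. -/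
noncomputable def Spoly : ℕ → Polynomial ℝ
  | 0 => 1
  | n + 1 =>
      (1 + Polynomial.C (n : ℝ) * X) * Spoly n + X * (1 - 2 * X) * (Spoly n).derivative

open Polynomial Finset Lagrange

theorem strictMonoOn_Iio_of_lt_succ {α : Type*} [Preorder α] {f : ℕ → α} {d : ℕ}
    (h : ∀ i, i + 1 < d → f i < f (i + 1)) : StrictMonoOn f (Set.Iio d) :=
  strictMonoOn_of_lt_succ Set.ordConnected_Iio fun i _ _ hi => h i hi

theorem mul_neg_of_neg_one_pow_mul_pos {R : Type*} [CommRing R] [LinearOrder R]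
    [IsStrictOrderedRing R] {k : ℕ} {x y : R}
    (hx : 0 < (-1) ^ (k + 1) * x) (hy : 0 < (-1) ^ k * y) : x * y < 0 := by
  rcases neg_one_pow_eq_or R k with h | h <;> simp only [pow_succ, h] at hx hy <;> nlinarith

theorem exists_zeros_of_sign_changes {f : ℝ → ℝ} (hf : Continuous f) {a : ℕ → ℝ}
    {d : ℕ} (ha : ∀ i < d, a i < a (i + 1)) (hsign : ∀ i < d, f (a i) * f (a (i + 1)) < 0) :
    ∃ s : ℕ → ℝ, ∀ i < d, s i ∈ Set.Ioo (a i) (a (i + 1)) ∧ f (s i) = 0 := by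
  have (i : ℕ) : ∃ x, i < d → x ∈ Set.Ioo (a i) (a (i + 1)) ∧ f x = 0 := by
    by_cases hi : i < d
    · have hIcc := hf.continuousOn (s := Set.Icc (a i) (a (i + 1)))
      rcases mul_neg_iff.mp (hsign i hi) with ⟨h₁, h₂⟩ | ⟨h₁, h₂⟩
      · obtain ⟨x, hx, hfx⟩ := intermediate_value_Ioo' (ha i hi).le hIcc ⟨h₂, h₁⟩
        exact ⟨x, fun _ => ⟨hx, hfx⟩⟩
      · obtain ⟨x, hx, hfx⟩ := intermediate_value_Ioo (ha i hi).le hIcc ⟨h₁, h₂⟩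
        exact ⟨x, fun _ => ⟨hx, hfx⟩⟩
    · exact ⟨0, fun h => absurd h hi⟩
  choose s hs using this
  exact ⟨s, hs⟩

namespace Lagrange

variable {R ι : Type*} [CommRing R] [LinearOrder R] [IsStrictOrderedRing R] {s : Finset ι}
  {v : ι → R} {x : R}

theorem eval_nodal_pos (h : ∀ i ∈ s, v i < x) : 0 < (nodal s v).eval x := by
  rw [eval_nodal]
  exact prod_pos fun i hi => sub_pos.mpr (h i hi)

theorem neg_one_pow_card_mul_eval_nodal_pos (h : ∀ i ∈ s, x < v i) :
    0 < (-1) ^ #s * (nodal s v).eval x := by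
  rw [eval_nodal, ← prod_neg]
  exact prod_pos fun i hi => by simpa using h i hi

theorem neg_one_pow_mul_eval_derivative_nodal_range_pos {d i : ℕ} {v : ℕ → R}
    (hv : StrictMonoOn v (Set.Iio d)) (hi : i < d) :
    0 < (-1) ^ (d - 1 - i) * (nodal (range d) v).derivative.eval (v i) := by
  have hsplit : (range d).erase i = range i ∪ Ioo i d := by
    ext j; simp only [mem_erase, mem_range, mem_union, mem_Ioo]; omega
  have hdisj : Disjoint (range i) (Ioo i d) :=
    disjoint_left.mpr fun j hj hj' => by simp only [mem_range, mem_Ioo] at hj hj'; omega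
  have hbelow : 0 < (nodal (range i) v).eval (v i) :=
    eval_nodal_pos fun j hj => hv ((mem_range.mp hj).trans hi) hi (mem_range.mp hj)
  have habove : 0 < (-1) ^ (d - 1 - i) * (nodal (Ioo i d) v).eval (v i) := by
    simpa [Nat.card_Ioo, Nat.sub_right_comm] using
      neg_one_pow_card_mul_eval_nodal_pos (s := Ioo i d) (v := v) (x := v i)
        fun j hj => hv hi (mem_Ioo.mp hj).2 (mem_Ioo.mp hj).1
  rw [eval_nodal_derivative_eval_node_eq (mem_range.mpr hi), hsplit, nodal, prod_union hdisj,
    eval_mul, ← nodal, ← nodal, mul_left_comm]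
  exact mul_pos hbelow habove

section Field

variable {K ι : Type*} [Field K] {s : Finset ι} {v : ι → K}

theorem nodal_dvd_of_eval_eq_zero {p : K[X]} (hv : Set.InjOn v s)
    (h : ∀ i ∈ s, p.eval (v i) = 0) : nodal s v ∣ p :=
  prod_dvd_of_coprime
    (fun _ hi _ hj hij =>
      isCoprime_X_sub_C_of_isUnit_sub (sub_ne_zero.mpr (hv.ne hi hj hij)).isUnit)
    fun i hi => dvd_iff_isRoot.mpr (h i hi)

theorem rootMultiplicity_nodal_le_one (hv : Set.InjOn v s) (x : K) :
    (nodal s v).rootMultiplicity x ≤ 1 := by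
  classical
  have : nodal s v = ∏ a ∈ s.image v, (X - C a) :=
    (prod_image (f := fun a => X - C a) fun _ hi _ hj => hv hi hj).symm
  rw [← count_roots, this, roots_prod_X_sub_C]
  exact Multiset.nodup_iff_count_le_one.mp (s.image v).nodup x

end Field

end Lagrange

def SplitsWithSimpleNegRoots (p : ℝ[X]) : Prop :=
  ∃ c > 0, ∃ d, ∃ r : ℕ → ℝ, StrictMonoOn r (Set.Iio d) ∧ (∀ i < d, r i < 0) ∧
    p = C c * nodal (range d) r

theorem splitsWithSimpleNegRoots_nodal_mul {d : ℕ} {s : ℕ → ℝ}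
    (hs : StrictMonoOn s (Set.Iio d)) (hneg : ∀ i < d, s i < 0) {q : ℝ[X]}
    (hq : q.natDegree ≤ 1) (hlead : 0 ≤ q.coeff 1)
    {b : ℝ} (hb : b ≤ 0) (hbs : ∀ i < d, b < s i) (hqb : 0 < q.eval b) :
    SplitsWithSimpleNegRoots (nodal (range d) s * q) := by
  have hq_eq := eq_X_add_C_of_natDegree_le_one hq
  rw [hq_eq] at hqb ⊢
  set l := q.coeff 1
  set m := q.coeff 0
  rcases hlead.eq_or_lt with hl | hl
  · rw [← hl] at hqb ⊢
    exact ⟨m, by simpa using hqb, d, s, hs, hneg, by simp [mul_comm]⟩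
  · set t := -m / l
    have ht : t < b := by
      rw [div_lt_iff₀ hl]; simp only [eval_add, eval_mul, eval_C, eval_X] at hqb; linarith
    set s' : ℕ → ℝ := fun i => if i = 0 then t else s (i - 1)
    refine ⟨l, hl, d + 1, s', strictMonoOn_Iio_of_lt_succ fun i hi => ?_, fun i hi => ?_, ?_⟩
    · rcases i with _ | i
      · simpa [s'] using (ht.trans (hbs 0 (by omega)))
      · simpa [s'] using hs (Set.mem_Iio.mpr (by omega)) (Set.mem_Iio.mpr (by omega))
          (Nat.lt_succ_self i)
    · rcases i with _ | i
      · simpa [s'] using ht.trans_le hb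
      · simpa [s'] using hneg i (by omega)
    · have hlin : C l * X + C m = C l * (X - C t) := by
        rw [mul_sub, ← C_mul, mul_div_cancel₀ _ hl.ne', C_neg, sub_neg_eq_add]
      have hnodal : nodal (range (d + 1)) s' = nodal (range d) s * (X - C t) := by
        simp [nodal, prod_range_succ', s']
      rw [hlin, hnodal]
      ring

theorem splitsWithSimpleNegRoots_of_alternating {d : ℕ} {r : ℕ → ℝ}
    (hr : StrictMonoOn r (Set.Iio d)) (hneg : ∀ i < d, r i < 0) {g : ℝ[X]}
    (hdeg : g.natDegree ≤ d + 1) (hlead : 0 ≤ g.coeff (d + 1))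
    (halt : ∀ i < d, 0 < (-1) ^ (d - i) * g.eval (r i)) (h0 : 0 < g.eval 0) :
    SplitsWithSimpleNegRoots g := by
  set a : ℕ → ℝ := fun i => if i < d then r i else 0
  have ha_nonpos (i : ℕ) : a i ≤ 0 := by
    by_cases hi : i < d
    · simpa [a, hi] using (hneg i hi).le
    · simp [a, hi]
  have ha_succ : ∀ i < d, a i < a (i + 1) := fun i hi => by
    by_cases hi' : i + 1 < d
    · simpa [a, hi, hi'] using hr hi hi' (Nat.lt_succ_self i)
    · simpa [a, hi, hi'] using hneg i hi
  have ha_alt : ∀ i ≤ d, 0 < (-1) ^ (d - i) * g.eval (a i) := fun i hi => by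
    rcases hi.lt_or_eq with hi | rfl
    · simpa [a, hi] using halt i hi
    · simpa [a] using h0
  obtain ⟨s, hs⟩ := exists_zeros_of_sign_changes g.continuous ha_succ fun i hi =>
    mul_neg_of_neg_one_pow_mul_pos (k := d - (i + 1))
      (by rw [show d - (i + 1) + 1 = d - i by omega]; exact ha_alt i hi.le) (ha_alt (i + 1) hi)
  have hs_mono : StrictMonoOn s (Set.Iio d) := strictMonoOn_Iio_of_lt_succ fun i hi =>
    (hs i (by omega)).1.2.trans (hs (i + 1) hi).1.1
  have hs_neg : ∀ i < d, s i < 0 := fun i hi => (hs i hi).1.2.trans_le (ha_nonpos _)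
  have has : ∀ i < d, a 0 < s i := fun i hi =>
    (hs 0 (by omega)).1.1.trans_le
      (hs_mono.monotoneOn (Set.mem_Iio.mpr (by omega)) hi (Nat.zero_le i))
  obtain ⟨q, rfl⟩ := nodal_dvd_of_eval_eq_zero (by rw [coe_range]; exact hs_mono.injOn)
    fun i hi => (hs i (mem_range.mp hi)).2
  have hq0 : q ≠ 0 := by rintro rfl; simp at h0
  have hqdeg : q.natDegree ≤ 1 := by
    rw [natDegree_mul nodal_ne_zero hq0, natDegree_nodal, card_range] at hdeg; omega
  have hqlead : (nodal (range d) s * q).coeff (d + 1) = q.coeff 1 := by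
    have := (nodal_monic (s := range d) (v := s)).coeff_natDegree
    rw [natDegree_nodal, card_range] at this
    rw [coeff_mul_add_eq_of_natDegree_le (by simp) hqdeg, this, one_mul]
  refine splitsWithSimpleNegRoots_nodal_mul hs_mono hs_neg hqdeg (hqlead ▸ hlead) (ha_nonpos 0)
    has ?_
  have hnodal := neg_one_pow_card_mul_eval_nodal_pos (s := range d) (v := s) (x := a 0)
    fun i hi => has i (mem_range.mp hi)
  have hg := ha_alt 0 (Nat.zero_le d)
  rw [card_range] at hnodal
  rw [eval_mul, Nat.sub_zero, ← mul_assoc] at hg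
  exact pos_of_mul_pos_right hg hnodal.le

namespace SplitsWithSimpleNegRoots

theorem exists_neg_eq_of_aeval_eq_zero {p : ℝ[X]} (hp : SplitsWithSimpleNegRoots p)
    {A : Type*} [CommRing A] [IsDomain A] [Algebra ℝ A] {z : A} (hz : aeval z p = 0) :
    ∃ r : ℝ, r < 0 ∧ z = algebraMap ℝ A r := by
  obtain ⟨c, hc, d, r, -, hneg, rfl⟩ := hp
  simp only [nodal, map_mul, aeval_C, map_prod, map_sub, aeval_X, mul_eq_zero,
    prod_eq_zero_iff, sub_eq_zero, mem_range] at hz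
  rcases hz with hz | ⟨i, hi, rfl⟩
  · exact absurd ((map_eq_zero_iff _ (algebraMap ℝ A).injective).mp hz) hc.ne'
  · exact ⟨r i, hneg i hi, rfl⟩

theorem rootMultiplicity_le_one {p : ℝ[X]} (hp : SplitsWithSimpleNegRoots p) (x : ℝ) :
    p.rootMultiplicity x ≤ 1 := by
  obtain ⟨c, hc, d, r, hr, -, rfl⟩ := hp
  rw [rootMultiplicity_mul (mul_ne_zero (C_ne_zero.mpr hc.ne') nodal_ne_zero), rootMultiplicity_C,
    zero_add]
  exact rootMultiplicity_nodal_le_one (by rw [coe_range]; exact hr.injOn) x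

end SplitsWithSimpleNegRoots

theorem eval_Spoly_succ (n : ℕ) (x : ℝ) :
    (Spoly (n + 1)).eval x =
      (1 + n * x) * (Spoly n).eval x + x * (1 - 2 * x) * (Spoly n).derivative.eval x := by
  simp [Spoly]

theorem coeff_Spoly_succ (n k : ℕ) :
    (Spoly (n + 1)).coeff (k + 1) =
      (k + 2) * (Spoly n).coeff (k + 1) + (n - 2 * k) * (Spoly n).coeff k := by
  set f := Spoly n
  have hexp : Spoly (n + 1) = f + C (n : ℝ) * (X * f) + X * derivative f
      - C 2 * (X * (X * derivative f)) := by
    rw [Spoly, C_ofNat]; ring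
  rcases k with _ | k <;>
    simp only [hexp, coeff_add, coeff_sub, map_natCast, coeff_natCast_mul, coeff_C_mul,
      coeff_X_mul, coeff_derivative, mul_coeff_zero, coeff_X_zero, Nat.cast_add, Nat.cast_one] <;>
    ring

theorem natDegree_Spoly_succ_le {n d : ℕ} (h : (Spoly n).natDegree ≤ d) :
    (Spoly (n + 1)).natDegree ≤ d + 1 := by
  refine natDegree_le_iff_coeff_eq_zero.mpr fun N hN => ?_
  obtain ⟨k, rfl⟩ : ∃ k, N = k + 1 := ⟨N - 1, by omega⟩
  rw [coeff_Spoly_succ, coeff_eq_zero_of_natDegree_lt (by omega),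
    coeff_eq_zero_of_natDegree_lt (p := Spoly n) (n := k) (by omega), mul_zero, mul_zero, add_zero]

theorem two_mul_natDegree_Spoly_le (n : ℕ) : 2 * (Spoly n).natDegree ≤ n := by
  induction n with
  | zero => simp [Spoly]
  | succ n ih =>
    set d := (Spoly n).natDegree
    rcases (show 2 * d + 1 ≤ n ∨ n = 2 * d by omega) with hlt | heq
    · have := natDegree_Spoly_succ_le (le_refl d); omega
    · suffices (Spoly (n + 1)).natDegree ≤ d by omega
      refine natDegree_le_iff_coeff_eq_zero.mpr fun N hN => ?_
      obtain ⟨k, rfl⟩ : ∃ k, N = k + 1 := ⟨N - 1, by omega⟩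
      rw [coeff_Spoly_succ, coeff_eq_zero_of_natDegree_lt (by omega), mul_zero, zero_add]
      rcases (show d = k ∨ d < k by omega) with rfl | hk
      · simp [heq]
      · rw [coeff_eq_zero_of_natDegree_lt hk, mul_zero]

theorem SplitsWithSimpleNegRoots.Spoly_succ {n : ℕ} (h : SplitsWithSimpleNegRoots (Spoly n)) :
    SplitsWithSimpleNegRoots (Spoly (n + 1)) := by
  obtain ⟨c, hc, d, r, hr, hneg, hf⟩ := h
  have hdeg : (Spoly n).natDegree = d := by
    rw [hf, natDegree_C_mul hc.ne', natDegree_nodal, card_range]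
  refine splitsWithSimpleNegRoots_of_alternating hr hneg (natDegree_Spoly_succ_le hdeg.le)
    ?_ (fun i hi => ?_) ?_
  · have hlc : (Spoly n).coeff d = c := by
      rw [← hdeg, coeff_natDegree, hf, leadingCoeff_mul, leadingCoeff_C, nodal_monic.leadingCoeff,
        mul_one]
    have h2d : (2 * d : ℝ) ≤ n := by exact_mod_cast hdeg ▸ two_mul_natDegree_Spoly_le n
    rw [coeff_Spoly_succ, coeff_eq_zero_of_natDegree_lt (by omega), hlc]
    nlinarith
  · have hroot : (Spoly n).eval (r i) = 0 := by
      rw [hf, eval_mul, eval_nodal_at_node (mem_range.mpr hi), mul_zero]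
    have hderiv : (Spoly n).derivative.eval (r i) =
        c * (nodal (range d) r).derivative.eval (r i) := by
      rw [hf, derivative_C_mul, eval_mul, eval_C]
    have hsign := neg_one_pow_mul_eval_derivative_nodal_range_pos hr hi
    have hri := hneg i hi
    rw [eval_Spoly_succ, hroot, hderiv, show d - i = d - 1 - i + 1 by omega, pow_succ]
    calc 0 < -r i * (1 - 2 * r i) * c *
          ((-1) ^ (d - 1 - i) * (nodal (range d) r).derivative.eval (r i)) := by
          exact mul_pos (mul_pos (mul_pos (by linarith) (by linarith)) hc) hsign
      _ = _ := by ring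
  · rw [eval_Spoly_succ, hf, eval_mul, eval_C]
    simpa using mul_pos hc (eval_nodal_pos fun i hi => hneg i (mem_range.mp hi))

theorem splitsWithSimpleNegRoots_Spoly (n : ℕ) : SplitsWithSimpleNegRoots (Spoly n) := by
  induction n with
  | zero =>
    exact ⟨1, one_pos, 0, 0, fun i hi => absurd hi (Nat.not_lt_zero i),
      fun i hi => absurd hi (Nat.not_lt_zero i), by simp [Spoly]⟩
  | succ n ih => exact ih.Spoly_succ

theorem stmt8_general (n : ℕ) :
    (∀ z : ℂ, Polynomial.aeval z (Spoly n) = 0 → ∃ r : ℝ, r < 0 ∧ z = (r : ℂ)) ∧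
    (∀ r : ℝ, (Spoly n).rootMultiplicity r ≤ 1) :=
  ⟨fun _ hz => (splitsWithSimpleNegRoots_Spoly n).exists_neg_eq_of_aeval_eq_zero hz,
    (splitsWithSimpleNegRoots_Spoly n).rootMultiplicity_le_one⟩

/-- For every `n ≥ 2`, the polynomial `S_n(x)` has only real zeros, all lying in
`(-∞, 0)`, and they are all simple. -/
theorem stmt8 (n : ℕ) (hn : 2 ≤ n) :
    (∀ z : ℂ, Polynomial.aeval z (Spoly n) = 0 → ∃ r : ℝ, r < 0 ∧ z = (r : ℂ)) ∧
    (∀ r : ℝ, (Spoly n).rootMultiplicity r ≤ 1) :=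
  stmt8_general n
end

section
/- For all n ≥ 0, S_n(x,y,q) = Σ_{i=0}^n C(n,i)·(yq-q)^i·S_{n-i}(x,q), where S_n(x,y,q) = Σ_{σ} x^{exc(σ)} y^{fix(σ)} q^{cyc(σ)} over simsun permutations of the second kind of [n] and S_n(x,q) = S_n(x,1,q). -/
open Classical in
/-- First return of `x` to the set `{y : (y:ℕ) < m}` under iteration of `σ`
(this is the image of `x` under the permutation induced by `σ` on that set,
i.e. on the letters remaining after removing the `n - m` largest letters). -/
noncomputable def firstReturn {n : ℕ} (σ : Equiv.Perm (Fin n)) (m : ℕ) (x : Fin n) : Fin n :=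
  if h : ∃ j : ℕ, 0 < j ∧ (((σ ^ j) x : Fin n) : ℕ) < m then (σ ^ Nat.find h) x else x

/-- A simsun permutation of the second kind: for every `k`, after removing the `k`
largest letters (restricting the cycle structure to the remaining letters), the
resulting permutation has no double excedances, i.e. no value `x` with
`σ⁻¹(x) < x < σ(x)` in the induced permutation. -/
def IsSimsun2 {n : ℕ} (σ : Equiv.Perm (Fin n)) : Prop :=
  ∀ m : ℕ, m ≤ n → ∀ x : Fin n, (x : ℕ) < m →
    ¬ (((firstReturn σ⁻¹ m x : Fin n) : ℕ) < (x : ℕ) ∧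
       (x : ℕ) < ((firstReturn σ m x : Fin n) : ℕ))

/-- Number of excedances of `σ`: indices `i` with `σ(i) > i`. -/
def excOf {n : ℕ} (σ : Equiv.Perm (Fin n)) : ℕ :=
  ((Finset.univ : Finset (Fin n)).filter (fun i : Fin n => (i : ℕ) < ((σ i : Fin n) : ℕ))).card

/-- Number of fixed points of `σ`. -/
def fixOf {n : ℕ} (σ : Equiv.Perm (Fin n)) : ℕ :=
  ((Finset.univ : Finset (Fin n)).filter (fun i : Fin n => σ i = i)).card

/-- Number of cycles of `σ` in its full cycle decomposition (fixed points count as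
cycles). -/
def cycOf {n : ℕ} (σ : Equiv.Perm (Fin n)) : ℕ :=
  σ.cycleType.card + fixOf σ

open Classical MvPolynomial in
/-- `S_n(x,y,q) = Σ_σ x^{exc(σ)} y^{fix(σ)} q^{cyc(σ)}` over simsun permutations of the
second kind of `[n]`; here `x = X 0`, `y = X 1`, `q = X 2`. -/
noncomputable def S3poly (n : ℕ) : MvPolynomial (Fin 3) ℚ :=
  ∑ σ : Equiv.Perm (Fin n),
    if IsSimsun2 σ then X 0 ^ excOf σ * X 1 ^ fixOf σ * X 2 ^ cycOf σ else 0

open Classical MvPolynomial in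
/-- `S_n(x,q) = S_n(x,1,q) = Σ_σ x^{exc(σ)} q^{cyc(σ)}` over simsun permutations of the
second kind of `[n]`. -/
noncomputable def S2poly (n : ℕ) : MvPolynomial (Fin 3) ℚ :=
  ∑ σ : Equiv.Perm (Fin n),
    if IsSimsun2 σ then X 0 ^ excOf σ * X 2 ^ cycOf σ else 0


/-!
Every permutation `σ` of `Fin n` arises in exactly one way from its fixed-point set `F` and a
derangement `τ` of `Fin (n - #F)`, by letting `τ` act on `Fᶜ` through the increasing bijection
`Fin (n - #F) ≃o Fᶜ`. Since this bijection is increasing and the points of `F` are fixed, the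
relabelling preserves excedances and first returns to initial segments, hence the simsun
property, while every point of `F` adds one fixed point and one cycle. Therefore
`S_n(x,y,q) = Σ_i C(n,i) (yq)^i D_{n-i}(x,q)` with `D_m` the sum over simsun derangements of
`Fin m`, and writing `yq = (yq - q) + q` turns this into the claim by binomial convolution.
-/

open Equiv Function Finset

section FirstReturn

variable {k n : ℕ}

theorem firstReturn_of_apply_eq_self {σ : Perm (Fin n)} {x : Fin n} (hx : σ x = x) (m : ℕ) :
    firstReturn σ m x = x := by
  unfold firstReturn
  split <;> simp [Perm.pow_apply_eq_self_of_apply_eq_self hx]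

theorem firstReturn_semiconj {τ : Perm (Fin k)} {σ : Perm (Fin n)} {e : Fin k → Fin n}
    (h : Semiconj e τ σ) {m₀ m : ℕ} (hm : ∀ y, (e y : ℕ) < m ↔ (y : ℕ) < m₀) (y : Fin k) :
    firstReturn σ m (e y) = e (firstReturn τ m₀ y) := by
  have hpow : ∀ j, (σ ^ j) (e y) = e ((τ ^ j) y) := fun j => by
    simp only [Perm.coe_pow, (h.iterate_right j).eq]
  have key : ∀ {j}, (0 < j ∧ (((σ ^ j) (e y) : Fin n) : ℕ) < m) ↔
      (0 < j ∧ (((τ ^ j) y : Fin k) : ℕ) < m₀) := by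
    intro j; rw [hpow, hm]
  unfold firstReturn
  by_cases hτ : ∃ j, 0 < j ∧ (((τ ^ j) y : Fin k) : ℕ) < m₀
  · have hσ : ∃ j, 0 < j ∧ (((σ ^ j) (e y) : Fin n) : ℕ) < m :=
      let ⟨j, hj⟩ := hτ; ⟨j, key.mpr hj⟩
    rw [dif_pos hσ, dif_pos hτ, Nat.find_congr' key, hpow]
  · have hσ : ¬ ∃ j, 0 < j ∧ (((σ ^ j) (e y) : Fin n) : ℕ) < m :=
      fun ⟨j, hj⟩ => hτ ⟨j, key.mp hj⟩
    rw [dif_neg hσ, dif_neg hτ]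

end FirstReturn

section Threshold

variable {k n : ℕ} {e : Fin k → Fin n}

theorem StrictMono.exists_lt_iff_lt_of_le (he : StrictMono e) {m₀ : ℕ} (hm₀ : m₀ ≤ k) :
    ∃ m ≤ n, ∀ y, (e y : ℕ) < m ↔ (y : ℕ) < m₀ := by
  rcases Nat.eq_zero_or_pos m₀ with rfl | hpos
  · exact ⟨0, Nat.zero_le _, fun y => by simp⟩
  · obtain ⟨top, htop⟩ : ∃ t : Fin k, (t : ℕ) = m₀ - 1 := ⟨⟨m₀ - 1, by omega⟩, rfl⟩
    refine ⟨e top + 1, (e top).isLt, fun y => ?_⟩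
    have := he.le_iff_le (a := y) (b := top)
    simp only [Fin.le_def] at this
    omega

theorem StrictMono.exists_lt_iff_lt (he : StrictMono e) (m : ℕ) :
    ∃ m₀ ≤ k, ∀ y, (e y : ℕ) < m ↔ (y : ℕ) < m₀ := by
  set s := univ.filter fun y => (e y : ℕ) < m
  refine ⟨#s, (card_le_univ s).trans_eq (Fintype.card_fin k), fun y => ⟨fun hy => ?_, fun hy => ?_⟩⟩
  · have : Iic y ⊆ s := fun z hz => by
      have := he.monotone (mem_Iic.mp hz)
      simp only [s, mem_filter, mem_univ, true_and, Fin.le_def] at this ⊢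
      omega
    have := card_le_card this
    rw [Fin.card_Iic] at this
    omega
  · by_contra hy'
    have : s ⊆ Iio y := fun z hz => by
      have := he.monotone (a := y) (b := z)
      simp only [s, mem_filter, mem_univ, true_and, mem_Iio, Fin.le_def, Fin.lt_def] at hz this ⊢
      omega
    have := card_le_card this
    rw [Fin.card_Iio] at this
    omega

end Threshold

section Semiconj

variable {k n : ℕ} {τ : Perm (Fin k)} {σ : Perm (Fin n)} {e : Fin k → Fin n}

theorem firstReturn_doubleExc_iff_of_semiconj (he : StrictMono e) (hc : Semiconj e τ σ)
    {m₀ m : ℕ} (hm : ∀ y, (e y : ℕ) < m ↔ (y : ℕ) < m₀) (y : Fin k) :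
    ((firstReturn σ⁻¹ m (e y) : ℕ) < e y ∧ (e y : ℕ) < firstReturn σ m (e y)) ↔
      ((firstReturn τ⁻¹ m₀ y : ℕ) < y ∧ (y : ℕ) < firstReturn τ m₀ y) := by
  have hc' : Semiconj e ⇑τ⁻¹ ⇑σ⁻¹ :=
    hc.inverses_right (fun _ => by simp) (fun _ => by simp)
  rw [firstReturn_semiconj hc hm, firstReturn_semiconj hc' hm]
  exact and_congr he.lt_iff_lt he.lt_iff_lt

variable (he : StrictMono e) (hc : Semiconj e τ σ) (hfix : ∀ x ∉ Set.range e, σ x = x)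
include he hc hfix

theorem isSimsun2_iff_of_semiconj : IsSimsun2 σ ↔ IsSimsun2 τ := by
  constructor
  · intro hσ m₀ hm₀ y hy
    obtain ⟨m, hmn, hm⟩ := he.exists_lt_iff_lt_of_le hm₀
    rw [← firstReturn_doubleExc_iff_of_semiconj he hc hm]
    exact hσ m hmn (e y) ((hm y).mpr hy)
  · intro hτ m _ x hx
    by_cases hxe : x ∈ Set.range e
    · obtain ⟨y, rfl⟩ := hxe
      obtain ⟨m₀, hm₀, hm⟩ := he.exists_lt_iff_lt m
      rw [firstReturn_doubleExc_iff_of_semiconj he hc hm]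
      exact hτ m₀ hm₀ y ((hm y).mp hx)
    · have hσx := hfix x hxe
      have hσx' : σ⁻¹ x = x := Perm.inv_eq_iff_eq.mpr hσx.symm
      rw [firstReturn_of_apply_eq_self hσx, firstReturn_of_apply_eq_self hσx']
      exact fun h => lt_irrefl _ h.1

theorem excOf_eq_of_semiconj : excOf σ = excOf τ := by
  symm
  refine card_bij (fun y _ => e y) (fun y hy => ?_) (fun _ _ _ _ h => he.injective h) ?_
  · simp only [mem_filter, mem_univ, true_and] at hy ⊢
    rw [← hc.eq]
    exact he hy
  · intro x hx
    simp only [mem_filter, mem_univ, true_and] at hx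
    by_cases hxe : x ∈ Set.range e
    · obtain ⟨y, rfl⟩ := hxe
      rw [← hc.eq] at hx
      exact ⟨y, by simpa using he.lt_iff_lt.mp hx, rfl⟩
    · rw [hfix x hxe] at hx
      exact absurd hx (lt_irrefl _)

end Semiconj

section ExtendFix

variable {n : ℕ} (F : Finset (Fin n))

theorem card_compl_fin : #Fᶜ = n - #F := by rw [card_compl, Fintype.card_fin]

noncomputable def extendFix (τ : Perm (Fin (n - #F))) : Perm (Fin n) :=
  τ.extendDomain (Fᶜ.orderIsoOfFin (card_compl_fin F)).toEquiv

variable {F} (τ : Perm (Fin (n - #F)))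

theorem semiconj_extendFix : Semiconj (Fᶜ.orderEmbOfFin (card_compl_fin F)) τ (extendFix F τ) :=
  fun y => by
    rw [← coe_orderIsoOfFin_apply, ← coe_orderIsoOfFin_apply, extendFix]
    exact (Perm.extendDomain_apply_image τ (Fᶜ.orderIsoOfFin (card_compl_fin F)).toEquiv y).symm

theorem extendFix_apply_of_mem {x : Fin n} (hx : x ∈ F) : extendFix F τ x = x :=
  Perm.extendDomain_apply_not_subtype _ _ (by simpa using hx)

theorem extendFix_apply_of_notMem_range {x : Fin n}
    (hx : x ∉ Set.range (Fᶜ.orderEmbOfFin (card_compl_fin F))) : extendFix F τ x = x :=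
  extendFix_apply_of_mem τ (by simpa using hx)

theorem cycleType_extendFix : (extendFix F τ).cycleType = τ.cycleType :=
  Perm.cycleType_extendDomain _

variable (F) in
theorem extendFix_injective : Injective (extendFix F) :=
  Perm.extendDomainHom_injective _

theorem compl_support_extendFix (hτ : τ ∈ derangements _) : (extendFix F τ).supportᶜ = F := by
  ext x
  simp only [mem_compl, Perm.mem_support, not_not]
  refine ⟨fun hx => ?_, extendFix_apply_of_mem τ⟩
  by_contra hxF
  obtain ⟨y, rfl⟩ : x ∈ Set.range (Fᶜ.orderEmbOfFin (card_compl_fin F)) := by simpa using hxF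
  rw [← semiconj_extendFix τ y] at hx
  exact hτ y ((Fᶜ.orderEmbOfFin _).injective hx)

theorem exists_extendFix_eq {σ : Perm (Fin n)} (hσ : σ.supportᶜ = F) :
    ∃ τ ∈ derangements (Fin (n - #F)), extendFix F τ = σ := by
  have hFc : ∀ x, x ∈ Fᶜ ↔ σ x ≠ x := fun x => by rw [← hσ, compl_compl, Perm.mem_support]
  have hp : ∀ x, σ x ∈ Fᶜ ↔ x ∈ Fᶜ := fun x => by
    simp only [hFc, ne_eq, EmbeddingLike.apply_eq_iff_eq]
  set τ := (Fᶜ.orderIsoOfFin (card_compl_fin F)).toEquiv.symm.permCongr (σ.subtypePerm hp)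
  have hext : extendFix F τ = σ := by
    refine Perm.ext fun x => ?_
    by_cases hx : x ∈ F
    · rw [extendFix_apply_of_mem τ hx]
      exact (not_not.mp ((hFc x).not.mp (by simpa using hx))).symm
    · rw [extendFix, Perm.extendDomain_apply_subtype _ _ (mem_compl.mpr hx)]
      simp [τ]
  refine ⟨τ, fun y hy => ?_, hext⟩
  have hfix := (semiconj_extendFix τ y).symm
  rw [hy, hext] at hfix
  exact (hFc _).mp (Fᶜ.orderEmbOfFin_mem _ y) hfix

end ExtendFix

theorem fixOf_eq_card_compl_support {n : ℕ} (σ : Perm (Fin n)) : fixOf σ = #σ.supportᶜ := by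
  rw [fixOf]
  congr 1
  ext
  simp

theorem fixOf_eq_zero_of_mem_derangements {n : ℕ} {σ : Perm (Fin n)} (hσ : σ ∈ derangements _) :
    fixOf σ = 0 :=
  card_eq_zero.mpr (filter_eq_empty_iff.mpr fun x _ => hσ x)

section ExtendFixStatistics

variable {n : ℕ} {F : Finset (Fin n)} (τ : Perm (Fin (n - #F)))

theorem isSimsun2_extendFix_iff : IsSimsun2 (extendFix F τ) ↔ IsSimsun2 τ :=
  isSimsun2_iff_of_semiconj (OrderEmbedding.strictMono _) (semiconj_extendFix τ)
    fun _ => extendFix_apply_of_notMem_range τ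

theorem excOf_extendFix : excOf (extendFix F τ) = excOf τ :=
  excOf_eq_of_semiconj (OrderEmbedding.strictMono _) (semiconj_extendFix τ)
    fun _ => extendFix_apply_of_notMem_range τ

variable {τ} (hτ : τ ∈ derangements _)
include hτ

theorem fixOf_extendFix : fixOf (extendFix F τ) = #F := by
  rw [fixOf_eq_card_compl_support, compl_support_extendFix τ hτ]

theorem cycOf_extendFix : cycOf (extendFix F τ) = cycOf τ + #F := by
  rw [cycOf, cycOf, cycleType_extendFix, fixOf_extendFix hτ, fixOf_eq_zero_of_mem_derangements hτ,
    add_zero]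

end ExtendFixStatistics

open Classical in
theorem sum_perm_eq_sum_sum_extendFix {M : Type*} [AddCommMonoid M] {n : ℕ}
    (g : Perm (Fin n) → M) :
    ∑ σ, g σ =
      ∑ F : Finset (Fin n), ∑ τ : Perm (Fin (n - #F)) with τ ∈ derangements _,
        g (extendFix F τ) := by
  rw [← sum_fiberwise univ (fun σ : Perm (Fin n) => σ.supportᶜ) g]
  refine sum_congr rfl fun F _ => ?_
  rw [← sum_image fun τ _ τ' _ h => extendFix_injective F h]
  congr 1
  ext σ
  simp only [mem_filter, mem_univ, true_and, mem_image]
  exact ⟨exists_extendFix_eq, fun ⟨τ, hτ, h⟩ => h ▸ compl_support_extendFix τ hτ⟩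

open Classical in
theorem sum_simsun_eq_sum_choose_nsmul {M : Type*} [AddCommMonoid M] (n : ℕ)
    (w : ℕ → ℕ → ℕ → M) :
    ∑ σ : Perm (Fin n), (if IsSimsun2 σ then w (excOf σ) (fixOf σ) (cycOf σ) else 0) =
      ∑ i ∈ range (n + 1), n.choose i •
        ∑ τ : Perm (Fin (n - i)) with τ ∈ derangements _,
          if IsSimsun2 τ then w (excOf τ) i (cycOf τ + i) else 0 := by
  rw [sum_perm_eq_sum_sum_extendFix, ← powerset_univ]
  convert sum_powerset_apply_card (x := (univ : Finset (Fin n))) (fun i =>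
    ∑ τ : Perm (Fin (n - i)) with τ ∈ derangements _,
      if IsSimsun2 τ then w (excOf τ) i (cycOf τ + i) else 0) using 1
  · refine sum_congr rfl fun F _ => sum_congr rfl fun τ hτ => ?_
    have hτ : τ ∈ derangements _ := (mem_filter.mp hτ).2
    rw [isSimsun2_extendFix_iff, excOf_extendFix, fixOf_extendFix hτ, cycOf_extendFix hτ]
  · rw [card_univ, Fintype.card_fin]

section BinomialTransform

variable {R : Type*} [CommSemiring R]

def binomialTransform (t : R) (d : ℕ → R) (n : ℕ) : R :=
  ∑ i ∈ range (n + 1), (n.choose i : R) * t ^ i * d (n - i)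

theorem binomialTransform_add (s t : R) (d : ℕ → R) (n : ℕ) :
    binomialTransform (s + t) d n = binomialTransform s (binomialTransform t d) n := by
  simp only [binomialTransform, add_pow, sum_mul, mul_sum]
  rw [sum_comm' (t' := range (n + 1)) (s' := fun i => Ico i (n + 1)) fun l i => by
    simp only [mem_range, mem_Ico]; omega]
  refine sum_congr rfl fun i hi => ?_
  rw [sum_Ico_eq_sum_range, show n + 1 - i = n - i + 1 by grind]
  refine sum_congr rfl fun j _ => ?_
  have hchoose : (n.choose (i + j) : R) * ((i + j).choose i : R) =
      (n.choose i : R) * ((n - i).choose j : R) := by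
    rw [← Nat.cast_mul, ← Nat.cast_mul, Nat.choose_mul (Nat.le_add_right i j),
      Nat.add_sub_cancel_left]
  rw [Nat.add_sub_cancel_left, Nat.sub_add_eq]
  calc _ = (n.choose (i + j) : R) * ((i + j).choose i : R) * (s ^ i * t ^ j * d (n - i - j)) := by
        ring
    _ = _ := by rw [hchoose]; ring

end BinomialTransform

open Classical in
theorem sum_simsun_monomial_eq_binomialTransform {R : Type*} [CommSemiring R] (a b c : R)
    (n : ℕ) :
    ∑ σ : Perm (Fin n), (if IsSimsun2 σ then a ^ excOf σ * b ^ fixOf σ * c ^ cycOf σ else 0) =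
      binomialTransform (b * c) (fun m => ∑ τ : Perm (Fin m) with τ ∈ derangements _,
        if IsSimsun2 τ then a ^ excOf τ * c ^ cycOf τ else 0) n := by
  rw [sum_simsun_eq_sum_choose_nsmul n fun e f k => a ^ e * b ^ f * c ^ k, binomialTransform]
  refine sum_congr rfl fun i _ => ?_
  simp only [nsmul_eq_mul, mul_sum]
  refine sum_congr rfl fun τ _ => ?_
  split_ifs <;> ring

open MvPolynomial in
/-- For all `n ≥ 0`, `S_n(x,y,q) = Σ_{i=0}^n C(n,i)·(yq-q)^i·S_{n-i}(x,q)`. -/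
theorem stmt18 (n : ℕ) :
    S3poly n =
      ∑ i ∈ Finset.range (n + 1),
        (n.choose i : MvPolynomial (Fin 3) ℚ) * (X 1 * X 2 - X 2) ^ i * S2poly (n - i) := by
  have hS2 : S2poly = binomialTransform (X 2) _ := funext fun m => by
    simpa [S2poly] using sum_simsun_monomial_eq_binomialTransform (X 0) 1 (X 2) m
  calc S3poly n = binomialTransform (X 1 * X 2) _ n :=
        sum_simsun_monomial_eq_binomialTransform (X 0) (X 1) (X 2) n
    _ = binomialTransform (X 1 * X 2 - X 2) S2poly n := by
        rw [hS2, ← binomialTransform_add, sub_add_cancel]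
end
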